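/- There exists Q ∈ ℂ[[ℏ, u_1, u_2]], symmetric under exchanging u_1 and u_2, such that P(u_1 + ℏ, u_2) − ((1 + e^ℏ)/2) · P(u_1, u_2) = (u_1 − u_2 − ℏ) · Q. -/

import Mathlib

/-
Let `τ` swap `u₁` and `u₂`. Every power series `F` satisfies `F - τ F = (u₁ - u₂) · V` with `τ V = V`:
an antisymmetric series vanishes on `u₁ = u₂`, so it is divisible by `u₁ - u₂` (with an explicit
quotient), and the quotient is symmetric by cancelling `u₁ - u₂`. Take `F = P₁` and `Q = V / 2`.
Applying `τ` to `(u₁ + ℏ - u₂) P₁ = e^{ℏ+u₁} - e^{u₂}` gives `(u₁ - u₂ - ℏ) τ P₁ = e^{u₁} - e^{ℏ+u₂}`,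
and after multiplication by `u₁ - u₂` the claimed identity becomes
`(1 + e^ℏ)(e^{u₁} - e^{u₂}) = (e^{ℏ+u₁} - e^{u₂}) + (e^{u₁} - e^{ℏ+u₂})`.
-/

noncomputable section

open MvPowerSeries

/-- The exponential `exp(a·ℏ + b·u₁ + c·u₂) ∈ ℂ[[ℏ,u₁,u₂]]` of a linear form. -/
def expLin3C (a b c : ℂ) : MvPowerSeries (Fin 3) ℂ :=
  fun d => (a ^ (d 0) / (d 0).factorial) * (b ^ (d 1) / (d 1).factorial) *
    (c ^ (d 2) / (d 2).factorial)

/-- `f` is symmetric under exchanging the variables `X 1` and `X 2`. -/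
def symm12 (f : MvPowerSeries (Fin 3) ℂ) : Prop :=
  ∀ d : Fin 3 →₀ ℕ,
    MvPowerSeries.coeff (Finsupp.equivMapDomain (Equiv.swap (1 : Fin 3) 2) d) f =
      MvPowerSeries.coeff d f

open Finset Finsupp

namespace MvPowerSeries

section CommSemiring

variable {σ R : Type*} [CommSemiring R]

theorem coeff_X_mul (i : σ) (f : MvPowerSeries σ R) (d : σ →₀ ℕ) :
    coeff d (X i * f) = if single i 1 ≤ d then coeff (d - single i 1) f else 0 := by
  rw [X, coeff_monomial_mul, one_mul]

theorem coeff_rename_equiv {τ : Type*} (e : σ ≃ τ) (f : MvPowerSeries σ R) (d : τ →₀ ℕ) :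
    coeff d (rename e f) = coeff (d.equivMapDomain e.symm) f := by
  have hd : d = Finsupp.embDomain e.toEmbedding (d.equivMapDomain e.symm) := by
    ext x
    obtain ⟨y, rfl⟩ := e.surjective x
    exact (Finsupp.embDomain_apply_self e.toEmbedding (d.equivMapDomain e.symm) y).symm
  conv_lhs => rw [hd]
  exact coeff_embDomain_rename _ _ _

theorem rename_swap_rename_swap [DecidableEq σ] (i j : σ) (f : MvPowerSeries σ R) :
    rename (Equiv.swap i j) (rename (Equiv.swap i j) f) = f := by
  have h := (renameEquiv R (Equiv.swap i j)).symm_apply_apply f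
  rwa [renameEquiv_symm, Equiv.symm_swap, renameEquiv_apply, renameEquiv_apply] at h

end CommSemiring

variable {σ R : Type*} [CommRing R] {i j : σ}

/-- For `c i = 0`, this is the coefficient of `X ^ c` in `G` after substituting `X j` for `X i`. -/
def diagSum (i j : σ) (G : MvPowerSeries σ R) (c : σ →₀ ℕ) : R :=
  ∑ k ∈ range (c j + 1), coeff (c + single i k - single j k) G

theorem diagSum_of_apply_eq_zero (G : MvPowerSeries σ R) {c : σ →₀ ℕ} (hc : c j = 0) :
    diagSum i j G c = coeff c G := by
  simp [diagSum, hc]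

theorem diagSum_eq_coeff_add (hij : i ≠ j) (G : MvPowerSeries σ R) {c : σ →₀ ℕ}
    (hc : single j 1 ≤ c) :
    diagSum i j G c = coeff c G + diagSum i j G (c - single j 1 + single i 1) := by
  obtain ⟨n, hn⟩ : ∃ n, c j = n + 1 := Nat.exists_eq_add_of_le' (single_le_iff.mp hc)
  have hj : (c - single j 1 + single i 1 : σ →₀ ℕ) j = n := by simp [hn, hij]
  rw [diagSum, diagSum, hn, hj, sum_range_succ', add_comm]
  congr 1
  · simp
  · refine sum_congr rfl fun k _ => congrArg (coeff · G) (Finsupp.ext fun x => ?_)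
    rcases eq_or_ne x i with rfl | hxi
    · simp [hij, add_assoc, add_comm]
    rcases eq_or_ne x j with rfl | hxj
    · simp [hij.symm, hn]
    · simp [hxi.symm, hxj.symm]

theorem X_sub_X_dvd_of_diagSum_eq_zero (hij : i ≠ j) {G : MvPowerSeries σ R}
    (hG : ∀ c : σ →₀ ℕ, c i = 0 → diagSum i j G c = 0) : X i - X j ∣ G := by
  -- along each line `c + k • (single i 1 - single j 1)`, `(X i - X j) * V = G` telescopes
  let V : MvPowerSeries σ R := fun d => diagSum i j G (d + single i 1)
  have hV (d : σ →₀ ℕ) : coeff d V = diagSum i j G (d + single i 1) := rfl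
  refine ⟨V, ?_⟩
  ext c
  rw [sub_mul, map_sub, coeff_X_mul, coeff_X_mul, hV, hV]
  by_cases hi : single i 1 ≤ c <;> by_cases hj : single j 1 ≤ c
  · rw [if_pos hi, if_pos hj, tsub_add_cancel_of_le hi, diagSum_eq_coeff_add hij G hj]
    ring
  · have hcj : c j = 0 := by simpa [single_le_iff] using hj
    rw [if_pos hi, if_neg hj, tsub_add_cancel_of_le hi, diagSum_of_apply_eq_zero G hcj, sub_zero]
  · have hci : c i = 0 := by simpa [single_le_iff] using hi
    have h := hG c hci
    rw [diagSum_eq_coeff_add hij G hj] at h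
    rw [if_neg hi, if_pos hj]
    linear_combination h
  · have hci : c i = 0 := by simpa [single_le_iff] using hi
    have hcj : c j = 0 := by simpa [single_le_iff] using hj
    rw [if_neg hi, if_neg hj, sub_zero, ← diagSum_of_apply_eq_zero G hcj, hG c hci]

variable [DecidableEq σ]

theorem diagSum_sub_rename_swap (hij : i ≠ j) (F : MvPowerSeries σ R) {c : σ →₀ ℕ}
    (hc : c i = 0) : diagSum i j (F - rename (Equiv.swap i j) F) c = 0 := by
  have hswap : ∀ k ∈ range (c j + 1),
      coeff (c + single i k - single j k) (rename (Equiv.swap i j) F) =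
        coeff (c + single i (c j + 1 - 1 - k) - single j (c j + 1 - 1 - k)) F := by
    intro k hk
    rw [mem_range] at hk
    rw [coeff_rename_equiv, Equiv.symm_swap]
    refine congrArg (coeff · F) (Finsupp.ext fun x => ?_)
    rcases eq_or_ne x i with rfl | hxi
    · simp [hij, hc]
    rcases eq_or_ne x j with rfl | hxj
    · simp [hij.symm, hc]
      omega
    · simp [hxi, hxj, Equiv.swap_apply_of_ne_of_ne]
  rw [diagSum, sum_congr rfl fun k _ => map_sub (coeff _) _ _, sum_sub_distrib,
    sum_congr rfl hswap, sum_range_reflect (fun k => coeff (c + single i k - single j k) F),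
    sub_self]

theorem X_sub_X_dvd_sub_rename_swap (hij : i ≠ j) (F : MvPowerSeries σ R) :
    X i - X j ∣ F - rename (Equiv.swap i j) F :=
  X_sub_X_dvd_of_diagSum_eq_zero hij fun _ hc => diagSum_sub_rename_swap hij F hc

theorem exists_rename_swap_eq_and_sub_rename_swap_eq_mul [IsDomain R] (hij : i ≠ j)
    (F : MvPowerSeries σ R) :
    ∃ V, rename (Equiv.swap i j) V = V ∧ F - rename (Equiv.swap i j) F = (X i - X j) * V := by
  obtain ⟨V, hV⟩ := X_sub_X_dvd_sub_rename_swap hij F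
  refine ⟨V, mul_left_cancel₀ (sub_ne_zero.mpr (X_inj.not.mpr hij)) ?_, hV⟩
  have hτV := congrArg (rename (Equiv.swap i j)) hV
  rw [map_sub, map_mul, map_sub, rename_swap_rename_swap, rename_X, rename_X,
    Equiv.swap_apply_left, Equiv.swap_apply_right] at hτV
  linear_combination hV + hτV

end MvPowerSeries

theorem symm12_of_rename_swap_eq {Q : MvPowerSeries (Fin 3) ℂ}
    (hQ : rename (Equiv.swap (1 : Fin 3) 2) Q = Q) : symm12 Q := fun d => by
  conv_rhs => rw [← hQ]
  rw [coeff_rename_equiv, Equiv.symm_swap]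

theorem rename_swap_expLin3C (a b c : ℂ) :
    rename (Equiv.swap (1 : Fin 3) 2) (expLin3C a b c) = expLin3C a c b := by
  ext d
  rw [coeff_rename_equiv]
  simp only [Equiv.symm_swap, coeff_apply, expLin3C, equivMapDomain_apply, ne_eq, zero_ne_one,
    not_false_eq_true, Fin.reduceEq, Equiv.swap_apply_of_ne_of_ne, Equiv.swap_apply_left,
    Equiv.swap_apply_right]
  ring

theorem expLin3C_mul (a b c : ℂ) : expLin3C a 0 0 * expLin3C 0 b c = expLin3C a b c := by
  ext d
  rw [coeff_mul, Finset.sum_eq_single (single 0 (d 0), d - single 0 (d 0))]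
  · simp only [coeff_apply, expLin3C, single_eq_same, ne_eq, one_ne_zero, not_false_eq_true,
      single_eq_of_ne, pow_zero, Nat.factorial_zero, Nat.cast_one, div_self, mul_one, Fin.reduceEq,
      coe_tsub, Pi.sub_apply, tsub_self, tsub_zero, one_mul]
    ring
  · rintro ⟨p, q⟩ hpq hne
    rw [HasAntidiagonal.mem_antidiagonal] at hpq
    subst hpq
    simp only [coeff_apply, expLin3C]
    by_contra h
    have hp1 : p 1 = 0 := by_contra fun h1 => h (by simp [h1])
    have hp2 : p 2 = 0 := by_contra fun h2 => h (by simp [h2])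
    have hq0 : q 0 = 0 := by_contra fun h0 => h (by simp [h0])
    refine hne (Prod.ext (Finsupp.ext fun x => ?_) (Finsupp.ext fun x => ?_)) <;>
      fin_cases x <;> simp [hp1, hp2, hq0]
  · intro h
    exact absurd (HasAntidiagonal.mem_antidiagonal.mpr (add_tsub_cancel_of_le (by simp))) h

/-- There exists `Q ∈ ℂ[[ℏ, u₁, u₂]]`, symmetric under exchanging
`u₁ ↔ u₂`, such that `P(u₁ + ℏ, u₂) − ((1 + e^ℏ)/2)·P(u₁, u₂) = (u₁ − u₂ − ℏ)·Q`,
where `(x − y)·P(x, y) = e^x − e^y`.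

The variables are `ℏ = X 0`, `u₁ = X 1`, `u₂ = X 2`; the substituted series
`P₁ = P(u₁ + ℏ, u₂)` and `P₂ = P(u₁, u₂)` are pinned down by their unique algebraic
characterisations below. -/
theorem statement13
    (P₁ P₂ : MvPowerSeries (Fin 3) ℂ)
    (hP₁ : (X 1 + X 0 - X 2) * P₁ = expLin3C 1 1 0 - expLin3C 0 0 1)
    (hP₂ : (X 1 - X 2) * P₂ = expLin3C 0 1 0 - expLin3C 0 0 1) :
    ∃ Q : MvPowerSeries (Fin 3) ℂ, symm12 Q ∧
      P₁ - (2 : ℂ)⁻¹ • ((1 + expLin3C 1 0 0) * P₂) = (X 1 - X 2 - X 0) * Q := by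
  have hτP₁ : (X 2 + X 0 - X 1) * rename (Equiv.swap (1 : Fin 3) 2) P₁ =
      expLin3C 1 0 1 - expLin3C 0 1 0 := by
    simpa [rename_X, rename_swap_expLin3C, Equiv.swap_apply_of_ne_of_ne] using
      congrArg (rename (Equiv.swap (1 : Fin 3) 2)) hP₁
  have h12 : (1 : Fin 3) ≠ 2 := by decide
  obtain ⟨V, hVsymm, hV⟩ := exists_rename_swap_eq_and_sub_rename_swap_eq_mul h12 P₁
  refine ⟨(2 : ℂ)⁻¹ • V, symm12_of_rename_swap_eq (by rw [map_smul, hVsymm]), ?_⟩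
  refine mul_left_cancel₀ (sub_ne_zero.mpr (X_inj.not.mpr h12)) ?_
  rw [smul_eq_C_mul, smul_eq_C_mul]
  have hC : (C (2 : ℂ)⁻¹ : MvPowerSeries (Fin 3) ℂ) * 2 = 1 := by
    rw [← map_ofNat C 2, ← map_mul, inv_mul_cancel₀ two_ne_zero, map_one]
  linear_combination C (2 : ℂ)⁻¹ * (hP₁ - (1 + expLin3C 1 0 0) * hP₂ - hτP₁
      + (X 1 - X 2 - X 0) * hV - expLin3C_mul 1 1 0 + expLin3C_mul 1 0 1) - (X 1 - X 2) * P₁ * hC
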